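/- Let X_1, …, X_n be a martingale difference sequence with respect to a filtration F = (F_i)_{0 ≤ i ≤ n}, with |X_i| ≤ K almost surely for all i. Let S_i = X_1 + ⋯ + X_i and let Σ_n² = Σ_{t=1}^n E[X_t² | F_{t−1}]. Then for all t > 0 and ν > 0, P( max_{i=1,…,n} S_i > √(2νt) + (√2/3) K t and Σ_n² ≤ ν ) ≤ e^{−t}. -/

import Mathlib

/-!
Comparing the Taylor series of `exp` with a geometric series gives
`exp y ≤ 1 + y + y² / (2 (1 - u / 3))` for `|y| ≤ u < 3`. Hence, for `0 ≤ s` with `s K < 3` and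
`φ = s² / (2 (1 - s K / 3))`, centredness gives
`E[exp (s X_i) | ℱ_{i-1}] ≤ 1 + φ E[X_i² | ℱ_{i-1}] ≤ exp (φ E[X_i² | ℱ_{i-1}])`, so
`exp (s S_i - φ Σ_i²)` is a nonnegative supermartingale started at `1`. Optional stopping at the
first time it exceeds `exp c` bounds the probability that it ever does by `exp (-c)`; on the event
`S_i > a, Σ_n² ≤ ν` it exceeds `exp (s a - φ ν)`. For `a = √(2νt) + K t / 3` the choice
`s = r / (ν + K r / 3)` with `r = √(2νt)` makes `s a - φ ν = t`.
-/

open MeasureTheory Finset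

theorem Nat.two_mul_three_pow_le_factorial_add_two (k : ℕ) : 2 * 3 ^ k ≤ (k + 2).factorial := by
  induction k with
  | zero => simp [Nat.factorial]
  | succ k ih =>
    rw [Nat.factorial_succ (k + 2), pow_succ]
    nlinarith

theorem Real.exp_le_one_add_add_sq_div_of_abs_le {y u : ℝ} (hyu : |y| ≤ u) (hu : u < 3) :
    Real.exp y ≤ 1 + y + y ^ 2 / (2 * (1 - u / 3)) := by
  have hu0 : 0 ≤ u := (abs_nonneg y).trans hyu
  have htail : HasSum (fun k => y ^ (k + 2) / (k + 2).factorial) (Real.exp y - 1 - y) := by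
    have := (hasSum_nat_add_iff' 2).mpr (Real.exp_eq_exp_ℝ ▸ NormedSpace.expSeries_div_hasSum_exp y)
    simpa [sum_range_succ, sub_sub] using this
  have hgeom : HasSum (fun k => y ^ 2 / 2 * (u / 3) ^ k) (y ^ 2 / 2 * (1 - u / 3)⁻¹) :=
    (hasSum_geometric_of_lt_one (by positivity) (by linarith)).mul_left _
  have hterm (k : ℕ) : y ^ (k + 2) / (k + 2).factorial ≤ y ^ 2 / 2 * (u / 3) ^ k := by
    have hpow : y ^ k ≤ u ^ k :=
      (le_abs_self _).trans (abs_pow y k ▸ pow_le_pow_left₀ (abs_nonneg y) hyu k)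
    have hfact : (2 * 3 ^ k : ℝ) ≤ (k + 2).factorial := by
      exact_mod_cast Nat.two_mul_three_pow_le_factorial_add_two k
    calc y ^ (k + 2) / (k + 2).factorial ≤ y ^ 2 * u ^ k / (2 * 3 ^ k) := by
          rw [pow_add, mul_comm (y ^ k)]
          gcongr
      _ = y ^ 2 / 2 * (u / 3) ^ k := by rw [div_pow]; ring
  have hle := hasSum_le hterm htail hgeom
  rw [← div_div, div_eq_mul_inv (y ^ 2 / 2)]
  linarith

theorem exists_chernoff_exponent {K t ν : ℝ} (hK : 0 ≤ K) (ht : 0 ≤ t) (hν : 0 < ν) :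
    ∃ s, 0 ≤ s ∧ s * K < 3 ∧
      t + s ^ 2 / (2 * (1 - s * K / 3)) * ν ≤ s * (√(2 * ν * t) + K / 3 * t) := by
  set r := √(2 * ν * t)
  have hr : 0 ≤ r := Real.sqrt_nonneg _
  have hr2 : r ^ 2 = 2 * ν * t := Real.sq_sqrt (by positivity)
  have hd : 0 < ν + K * r / 3 := by positivity
  refine ⟨r / (ν + K * r / 3), by positivity, ?_, le_of_eq ?_⟩
  · rw [div_mul_eq_mul_div, div_lt_iff₀ hd]
    nlinarith
  · have h1 : 1 - r / (ν + K * r / 3) * K / 3 = ν / (ν + K * r / 3) := by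
      field_simp; ring
    rw [h1]
    field_simp
    linear_combination -3 * hr2

section ConditionalExpectation

variable {Ω : Type*} {m m0 : MeasurableSpace Ω} {μ : Measure Ω}

theorem ae_mul_sub_mul_condExp_sq_le {Y : Ω → ℝ} {K s c : ℝ} (hc : 0 ≤ c)
    (hbdd : ∀ᵐ ω ∂μ, |Y ω| ≤ K) :
    ∀ᵐ ω ∂μ, s * Y ω - c * μ[fun ω => Y ω ^ 2 | m] ω ≤ |s| * K := by
  filter_upwards [hbdd, condExp_nonneg (m := m) (.of_forall fun ω => sq_nonneg (Y ω))]
    with ω hω hV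
  have := (le_abs_self _).trans (abs_mul s _ ▸ mul_le_mul_of_nonneg_left hω (abs_nonneg s))
  nlinarith [mul_nonneg hc hV]

variable [IsFiniteMeasure μ]

theorem integrable_exp_mul_of_abs_le {Y : Ω → ℝ} {K : ℝ} (hY : AEStronglyMeasurable Y μ)
    (hbdd : ∀ᵐ ω ∂μ, |Y ω| ≤ K) (s : ℝ) : Integrable (fun ω => Real.exp (s * Y ω)) μ := by
  refine .of_bound (Real.continuous_exp.comp_aestronglyMeasurable (hY.const_mul s))
    (Real.exp (|s| * K)) ?_
  filter_upwards [hbdd] with ω hω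
  rw [Real.norm_eq_abs, Real.abs_exp, Real.exp_le_exp]
  exact (le_abs_self _).trans (abs_mul s _ ▸ mul_le_mul_of_nonneg_left hω (abs_nonneg s))

theorem condExp_exp_mul_le {Y : Ω → ℝ} {K s : ℝ} (hm : m ≤ m0) (hY : AEStronglyMeasurable Y μ)
    (hbdd : ∀ᵐ ω ∂μ, |Y ω| ≤ K) (hmean : μ[Y | m] =ᵐ[μ] 0) (hsK : |s| * K < 3) :
    μ[fun ω => Real.exp (s * Y ω) | m] ≤ᵐ[μ]
      fun ω => 1 + s ^ 2 / (2 * (1 - |s| * K / 3)) * μ[fun ω => Y ω ^ 2 | m] ω := by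
  set φ := s ^ 2 / (2 * (1 - |s| * K / 3))
  have hYint : Integrable Y μ := .of_bound hY K (by simpa only [Real.norm_eq_abs] using hbdd)
  have hY2int : Integrable (fun ω => Y ω ^ 2) μ := by
    refine .of_bound (hY.pow 2) (K ^ 2) ?_
    filter_upwards [hbdd] with ω hω
    rw [Real.norm_eq_abs, abs_pow]
    exact pow_le_pow_left₀ (abs_nonneg _) hω 2
  have hpointwise : (fun ω => Real.exp (s * Y ω)) ≤ᵐ[μ]
      (fun _ => (1 : ℝ)) + s • Y + φ • fun ω => Y ω ^ 2 := by
    filter_upwards [hbdd] with ω hω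
    have := Real.exp_le_one_add_add_sq_div_of_abs_le
      (abs_mul s _ ▸ mul_le_mul_of_nonneg_left hω (abs_nonneg s)) hsK
    simp only [Pi.add_apply, Pi.smul_apply, smul_eq_mul, φ]
    convert this using 2
    ring
  have hlin : μ[(fun _ => (1 : ℝ)) + s • Y + φ • fun ω => Y ω ^ 2 | m] =ᵐ[μ]
      (fun _ => (1 : ℝ)) + s • μ[Y | m] + φ • μ[fun ω => Y ω ^ 2 | m] := by
    filter_upwards [condExp_add ((integrable_const 1).add (hYint.smul s)) (hY2int.smul φ) m,
      condExp_add (integrable_const 1) (hYint.smul s) m, condExp_smul s Y m,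
      condExp_smul φ (fun ω => Y ω ^ 2) m] with ω h1 h2 h3 h4
    simp only [Pi.add_apply, Pi.smul_apply] at h1 h2 h3 h4 ⊢
    rw [h1, h2, h3, h4, condExp_const hm]
  filter_upwards [condExp_mono (integrable_exp_mul_of_abs_le hY hbdd s)
    ((integrable_const 1).add (hYint.smul s) |>.add (hY2int.smul φ)) hpointwise, hlin, hmean]
    with ω h1 h2 h3
  simp only [Pi.add_apply, Pi.smul_apply, smul_eq_mul, Pi.zero_apply] at h1 h2 h3
  rw [h2, h3] at h1
  linarith

theorem condExp_exp_mul_sub_le_one {Y : Ω → ℝ} {K s : ℝ} (hm : m ≤ m0)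
    (hY : AEStronglyMeasurable Y μ) (hbdd : ∀ᵐ ω ∂μ, |Y ω| ≤ K) (hmean : μ[Y | m] =ᵐ[μ] 0)
    (hsK : |s| * K < 3) :
    μ[fun ω => Real.exp (s * Y ω - s ^ 2 / (2 * (1 - |s| * K / 3)) * μ[fun ω => Y ω ^ 2 | m] ω)
      | m] ≤ᵐ[μ] 1 := by
  set φ := s ^ 2 / (2 * (1 - |s| * K / 3))
  set V := μ[fun ω => Y ω ^ 2 | m]
  have hφ : 0 ≤ φ := div_nonneg (sq_nonneg s) (by linarith)
  have hV : 0 ≤ᵐ[μ] V := condExp_nonneg (.of_forall fun ω => sq_nonneg (Y ω))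
  have hcomp : StronglyMeasurable[m] fun ω => Real.exp (-(φ * V ω)) :=
    Real.continuous_exp.comp_stronglyMeasurable (stronglyMeasurable_condExp.const_mul φ).neg
  have hfactor : (fun ω => Real.exp (s * Y ω - φ * V ω)) =
      (fun ω => Real.exp (-(φ * V ω))) * fun ω => Real.exp (s * Y ω) := by
    ext ω
    rw [Pi.mul_apply, ← Real.exp_add, sub_eq_neg_add]
  have hint : Integrable (fun ω => Real.exp (s * Y ω - φ * V ω)) μ := by
    refine .of_bound (Real.continuous_exp.comp_aestronglyMeasurable ((hY.const_mul s).sub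
      ((stronglyMeasurable_condExp.mono hm).aestronglyMeasurable.const_mul φ)))
      (Real.exp (|s| * K)) ?_
    filter_upwards [hbdd, hV] with ω hω hVω
    rw [Real.norm_eq_abs, Real.abs_exp, Real.exp_le_exp]
    have := (le_abs_self _).trans (abs_mul s _ ▸ mul_le_mul_of_nonneg_left hω (abs_nonneg s))
    nlinarith [mul_nonneg hφ hVω]
  filter_upwards [condExp_mul_of_stronglyMeasurable_left hcomp (hfactor ▸ hint)
    (integrable_exp_mul_of_abs_le hY hbdd s), condExp_exp_mul_le hm hY hbdd hmean hsK, hV]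
    with ω hpull hmgf hVω
  rw [hfactor, hpull, Pi.mul_apply, Pi.one_apply]
  calc Real.exp (-(φ * V ω)) * μ[fun ω => Real.exp (s * Y ω) | m] ω
      ≤ Real.exp (-(φ * V ω)) * Real.exp (φ * V ω) := by
        gcongr
        exact hmgf.trans (by linarith [Real.add_one_le_exp (φ * V ω)])
    _ = 1 := by rw [← Real.exp_add, neg_add_cancel, Real.exp_zero]

theorem MeasureTheory.Supermartingale.maximal_ineq {ℱ : Filtration ℕ m0} {f : ℕ → Ω → ℝ}
    (hf : Supermartingale f ℱ μ) (hnonneg : 0 ≤ f) (ε : ℝ) (n : ℕ) :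
    ε * μ.real {ω | ε ≤ (range (n + 1)).sup' nonempty_range_add_one fun k => f k ω} ≤
      ∫ ω, f 0 ω ∂μ := by
  set τ : Ω → ℕ∞ := fun ω => (hittingBtwn f (Set.Ici ε) 0 n ω : ℕ)
  have hτ : IsStoppingTime ℱ τ :=
    hf.stronglyAdapted.adapted.isStoppingTime_hittingBtwn measurableSet_Ici
  have hτle (ω : Ω) : τ ω ≤ n := WithTop.coe_le_coe.mpr (hittingBtwn_le ω)
  have hint : Integrable (stoppedValue f τ) μ := integrable_stoppedValue ℕ hτ hf.integrable hτle
  have hmeas : MeasurableSet {ω | ε ≤ (range (n + 1)).sup' nonempty_range_add_one fun k => f k ω} :=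
    measurableSet_le measurable_const (measurable_range_sup'' fun k _ =>
      (hf.stronglyMeasurable k).measurable.le (ℱ.le k))
  have hhit (ω : Ω) (hω : ε ≤ (range (n + 1)).sup' nonempty_range_add_one fun k => f k ω) :
      ε ≤ stoppedValue f τ ω := by
    obtain ⟨k, hk, hεk⟩ := (le_sup'_iff _).mp hω
    exact stoppedValue_hittingBtwn_mem ⟨k, ⟨k.zero_le, Nat.lt_succ_iff.mp (mem_range.mp hk)⟩, hεk⟩
  have hoptional : ∫ ω, stoppedValue f τ ω ∂μ ≤ ∫ ω, f 0 ω ∂μ := by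
    have := hf.neg.expected_stoppedValue_mono (isStoppingTime_const ℱ 0) hτ
      (fun ω => zero_le) hτle
    rw [stoppedValue_const] at this
    simpa [stoppedValue, integral_neg] using this
  calc _ ≤ ∫ ω in {ω | ε ≤ (range (n + 1)).sup' nonempty_range_add_one fun k => f k ω},
        stoppedValue f τ ω ∂μ :=
        setIntegral_ge_of_const_le_real hmeas (measure_ne_top _ _) hhit hint.integrableOn
    _ ≤ ∫ ω, stoppedValue f τ ω ∂μ := setIntegral_le_integral hint (.of_forall fun ω => hnonneg _ _)
    _ ≤ ∫ ω, f 0 ω ∂μ := hoptional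

theorem supermartingale_exp_sum {ℱ : Filtration ℕ m0} {D : ℕ → Ω → ℝ} {n : ℕ} {C : ℝ}
    (hmeas : ∀ j ∈ Icc 1 n, StronglyMeasurable[ℱ j] (D j))
    (hbdd : ∀ j ∈ Icc 1 n, ∀ᵐ ω ∂μ, D j ω ≤ C)
    (hstep : ∀ j ∈ Icc 1 n, μ[fun ω => Real.exp (D j ω) | ℱ (j - 1)] ≤ᵐ[μ] 1) :
    Supermartingale (fun i ω => Real.exp (∑ j ∈ Icc 1 (min i n), D j ω)) ℱ μ := by
  set M : ℕ → Ω → ℝ := fun i ω => Real.exp (∑ j ∈ Icc 1 (min i n), D j ω)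
  have hsub {i j : ℕ} (hj : j ∈ Icc 1 (min i n)) : j ∈ Icc 1 n ∧ j ≤ i := by
    simp only [mem_Icc, le_min_iff] at hj ⊢
    omega
  have hadapted : StronglyAdapted ℱ M := fun i =>
    Real.continuous_exp.comp_stronglyMeasurable (stronglyMeasurable_fun_sum _ fun j hj =>
      (hmeas j (hsub hj).1).mono (ℱ.mono (hsub hj).2))
  have hint (i : ℕ) : Integrable (M i) μ := by
    refine .of_bound ((hadapted i).mono (ℱ.le i)).aestronglyMeasurable
      (Real.exp (#(Icc 1 (min i n)) • C)) ?_
    filter_upwards [(Filter.eventually_all_finset _).mpr hbdd] with ω hω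
    rw [Real.norm_eq_abs, Real.abs_exp, Real.exp_le_exp]
    exact sum_le_card_nsmul _ _ _ fun j hj => hω j (hsub hj).1
  refine supermartingale_nat hadapted hint fun i => ?_
  rcases lt_or_ge i n with hi | hi
  · have hi1 : i + 1 ∈ Icc 1 n := mem_Icc.mpr ⟨Nat.le_add_left 1 i, hi⟩
    have hfactor : M (i + 1) = M i * fun ω => Real.exp (D (i + 1) ω) := by
      ext ω
      simp only [M, Pi.mul_apply, min_eq_left (show i + 1 ≤ n from hi), min_eq_left hi.le,
        sum_Icc_succ_top (Nat.le_add_left 1 i), Real.exp_add]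
    have hexp_int : Integrable (fun ω => Real.exp (D (i + 1) ω)) μ := by
      refine .of_bound (Real.continuous_exp.comp_stronglyMeasurable
        ((hmeas _ hi1).mono (ℱ.le _))).aestronglyMeasurable (Real.exp C) ?_
      filter_upwards [hbdd _ hi1] with ω hω
      rwa [Real.norm_eq_abs, Real.abs_exp, Real.exp_le_exp]
    have hcond := hstep _ hi1
    rw [Nat.add_sub_cancel] at hcond
    filter_upwards [condExp_mul_of_stronglyMeasurable_left (hadapted i) (hfactor ▸ hint (i + 1))
      hexp_int, hcond] with ω hpull hω
    rw [hfactor, hpull, Pi.mul_apply]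
    exact mul_le_of_le_one_right (Real.exp_pos _).le hω
  · have hstop : M (i + 1) = M i := by
      simp only [M, min_eq_right hi, min_eq_right (hi.trans (i.le_add_right 1))]
    rw [hstop, condExp_of_stronglyMeasurable (ℱ.le i) (hadapted i) (hint i)]

end ConditionalExpectation

theorem measure_exists_sum_gt_and_sum_condExp_sq_le {Ω : Type*} [m0 : MeasurableSpace Ω]
    {μ : Measure Ω} [IsProbabilityMeasure μ] {ℱ : Filtration ℕ m0} {X : ℕ → Ω → ℝ} {n : ℕ}
    {K : ℝ} (hadp : ∀ i ∈ Icc 1 n, StronglyMeasurable[ℱ i] (X i))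
    (hmd : ∀ i ∈ Icc 1 n, μ[X i | ℱ (i - 1)] =ᵐ[μ] 0)
    (hbdd : ∀ i ∈ Icc 1 n, ∀ᵐ ω ∂μ, |X i ω| ≤ K) {s : ℝ} (hs : 0 ≤ s) (hsK : s * K < 3)
    (a ν : ℝ) :
    μ {ω | (∃ i ∈ Icc 1 n, a < ∑ j ∈ Icc 1 i, X j ω) ∧
        ∑ j ∈ Icc 1 n, μ[fun ω => X j ω ^ 2 | ℱ (j - 1)] ω ≤ ν} ≤
      ENNReal.ofReal (Real.exp (-(s * a - s ^ 2 / (2 * (1 - s * K / 3)) * ν))) := by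
  set φ := s ^ 2 / (2 * (1 - s * K / 3))
  set c := s * a - φ * ν
  have hsK' : |s| * K < 3 := by rwa [abs_of_nonneg hs]
  have hφ : 0 ≤ φ := div_nonneg (sq_nonneg s) (by linarith)
  set V : ℕ → Ω → ℝ := fun j => μ[fun ω => X j ω ^ 2 | ℱ (j - 1)]
  set M : ℕ → Ω → ℝ := fun i ω => Real.exp (∑ j ∈ Icc 1 (min i n), (s * X j ω - φ * V j ω))
  have hsuper : Supermartingale M ℱ μ :=
    supermartingale_exp_sum
      (fun j hj => ((hadp j hj).const_mul s).sub
        ((stronglyMeasurable_condExp.mono (ℱ.mono (j.sub_le 1))).const_mul φ))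
      (fun j hj => ae_mul_sub_mul_condExp_sq_le hφ (hbdd j hj))
      (fun j hj => by
        simpa only [φ, abs_of_nonneg hs] using condExp_exp_mul_sub_le_one (ℱ.le _)
          ((hadp j hj).mono (ℱ.le j)).aestronglyMeasurable (hbdd j hj) (hmd j hj) hsK')
  have hmax := hsuper.maximal_ineq (fun i ω => (Real.exp_pos _).le) (Real.exp c) n
  have hM0 : ∫ ω, M 0 ω ∂μ = 1 := by simp [M]
  have hV : ∀ᵐ ω ∂μ, ∀ j ∈ Icc 1 n, 0 ≤ V j ω := (Filter.eventually_all_finset _).mpr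
    fun j _ => condExp_nonneg (.of_forall fun ω => sq_nonneg (X j ω))
  calc _ ≤ μ {ω | Real.exp c ≤ (range (n + 1)).sup' nonempty_range_add_one fun k => M k ω} := by
        refine measure_mono_ae ?_
        filter_upwards [hV] with ω hVω ⟨⟨i, hi, hSi⟩, hvar⟩
        have hvari : ∑ j ∈ Icc 1 i, V j ω ≤ ν :=
          (sum_le_sum_of_subset_of_nonneg (Icc_subset_Icc le_rfl (mem_Icc.mp hi).2)
            fun j hj _ => hVω j hj).trans hvar
        refine le_sup'_of_le _ (mem_range.mpr (Nat.lt_succ_of_le (mem_Icc.mp hi).2)) ?_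
        simp only [M, min_eq_left (mem_Icc.mp hi).2, Real.exp_le_exp, sum_sub_distrib, ← mul_sum]
        exact sub_le_sub (mul_le_mul_of_nonneg_left hSi.le hs) (mul_le_mul_of_nonneg_left hvari hφ)
    _ = ENNReal.ofReal (μ.real
          {ω | Real.exp c ≤ (range (n + 1)).sup' nonempty_range_add_one fun k => M k ω}) :=
        (ofReal_measureReal).symm
    _ ≤ ENNReal.ofReal (Real.exp (-c)) := by
        refine ENNReal.ofReal_le_ofReal ?_
        rw [Real.exp_neg, ← one_div, le_div_iff₀' (Real.exp_pos c)]
        linarith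

/-- Bernstein's inequality for martingales (second form): for a martingale
difference sequence `X_1, …, X_n` w.r.t. the filtration `ℱ` with `|X_i| ≤ K` a.s.,
writing `S_i = X_1 + ⋯ + X_i` and `Σ_n² = ∑_{t=1}^n E[X_t² | ℱ_{t−1}]`,
`P(max_{1≤i≤n} S_i > √(2νt) + (√2/3)Kt ∧ Σ_n² ≤ ν) ≤ e^{−t}`. -/
theorem bernstein_martingale' {Ω : Type*} [m0 : MeasurableSpace Ω]
    (μ : Measure Ω) [IsProbabilityMeasure μ]
    (n : ℕ) (hn : 1 ≤ n) (ℱ : Filtration ℕ m0)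
    (X : ℕ → Ω → ℝ) (K : ℝ) (hK : 0 < K)
    (hadp : ∀ i ∈ Icc 1 n, StronglyMeasurable[ℱ i] (X i))
    (hmd : ∀ i ∈ Icc 1 n, μ[X i | ℱ (i - 1)] =ᵐ[μ] 0)
    (hbdd : ∀ i ∈ Icc 1 n, ∀ᵐ ω ∂μ, |X i ω| ≤ K)
    (t ν : ℝ) (ht : 0 < t) (hν : 0 < ν) :
    μ {ω | ((Icc 1 n).sup' (Finset.nonempty_Icc.mpr hn)
          fun i => ∑ j ∈ Icc 1 i, X j ω) >
            Real.sqrt (2 * ν * t) + Real.sqrt 2 / 3 * K * t ∧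
        (∑ s ∈ Icc 1 n, (μ[(fun ω' => (X s ω') ^ 2) | ℱ (s - 1)]) ω) ≤ ν} ≤
      ENNReal.ofReal (Real.exp (-t)) := by
  obtain ⟨s, hs, hsK, hchoice⟩ := exists_chernoff_exponent hK.le ht.le hν
  have hthreshold : √(2 * ν * t) + K / 3 * t ≤ √(2 * ν * t) + √2 / 3 * K * t := by
    have : 1 ≤ √2 := Real.one_le_sqrt.mpr (by norm_num)
    nlinarith [mul_pos hK ht]
  calc _ ≤ μ {ω | (∃ i ∈ Icc 1 n, √(2 * ν * t) + K / 3 * t < ∑ j ∈ Icc 1 i, X j ω) ∧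
          ∑ j ∈ Icc 1 n, μ[fun ω => X j ω ^ 2 | ℱ (j - 1)] ω ≤ ν} := by
        refine measure_mono fun ω ⟨hS, hvar⟩ => ⟨?_, hvar⟩
        obtain ⟨i, hi, hSi⟩ := (lt_sup'_iff _).mp hS
        exact ⟨i, hi, hthreshold.trans_lt hSi⟩
    _ ≤ _ := measure_exists_sum_gt_and_sum_condExp_sq_le hadp hmd hbdd hs hsK _ ν
    _ ≤ ENNReal.ofReal (Real.exp (-t)) := by
        gcongr
        linarith
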